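/- arXiv:2208.01484 — 6 statements merged into one kernel-verified Lean document; each statement's English description precedes it below -/
import Mathlib

section
/- If a permutation π contains the pattern 231 but contains no copy of the Fishburn pattern f, then π contains the pattern 3142. -/
/-- Two lists of naturals have the same length and the same relative order
(including ties). -/
def SameRelOrder (u v : List ℕ) : Prop :=
  u.length = v.length ∧
    ∀ i j, i < u.length → j < u.length →
      (u.getD i 0 < u.getD j 0 ↔ v.getD i 0 < v.getD j 0)

/-- `α` contains `β` as a pattern: some subsequence of `α` has the same length
and relative order as `β`. -/
def SeqContains (α β : List ℕ) : Prop :=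
  ∃ γ : List ℕ, γ.Sublist α ∧ SameRelOrder γ β

/-- A copy of the Fishburn pattern `f` in `l`: indices `j`, `k` with `j + 1 < k`,
`l j = l k + 1` and `l (j+1) > l j`. -/
def HasFishburnCopy (l : List ℕ) : Prop :=
  ∃ j k, j + 1 < k ∧ k < l.length ∧
    l.getD j 0 = l.getD k 0 + 1 ∧ l.getD j 0 < l.getD (j + 1) 0

/-- A Fishburn permutation contains no copy of the Fishburn pattern `f`. -/
def FishburnFree (l : List ℕ) : Prop := ¬ HasFishburnCopy l

/-- `l` is a permutation of `1, …, n`, written in one-line notation. -/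
def IsPermList (n : ℕ) (l : List ℕ) : Prop := l.Perm (List.range' 1 n)

/-- The set of Fishburn permutations of length `n` avoiding each pattern in `pats`. -/
def FishburnSet (n : ℕ) (pats : List (List ℕ)) : Set (List ℕ) :=
  {l | IsPermList n l ∧ FishburnFree l ∧ ∀ p ∈ pats, ¬ SeqContains l p}

/-- The set of all permutations of length `n` avoiding each pattern in `pats`. -/
def PermSet (n : ℕ) (pats : List (List ℕ)) : Set (List ℕ) :=
  {l | IsPermList n l ∧ ∀ p ∈ pats, ¬ SeqContains l p}

/-- The number of ascents of a sequence. -/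
def ascCount (l : List ℕ) : ℕ :=
  ((Finset.range l.length).filter
    (fun i => i + 1 < l.length ∧ l.getD i 0 < l.getD (i + 1) 0)).card

/-- `l` is an ascent sequence. -/
def IsAscentSeq (l : List ℕ) : Prop :=
  (0 < l.length → l.getD 0 0 = 0) ∧
    ∀ j, 0 < j → j < l.length → l.getD j 0 ≤ 1 + ascCount (l.take j)

/-- The set of ascent sequences of length `n` avoiding each pattern in `pats`. -/
def AscentSeqSet (n : ℕ) (pats : List (List ℕ)) : Set (List ℕ) :=
  {l | l.length = n ∧ IsAscentSeq l ∧ ∀ p ∈ pats, ¬ SeqContains l p}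


/-!
Take an occurrence `π_i π_j π_k` of 231 whose first entry `a = π_i` is minimal. If
`π_{i+1} > a`, the value `a - 1` cannot lie to the right of `i + 1`, since then
`π_i π_{i+1} (a - 1)` would be a copy of `f`; so `a - 1` lies left of `i` and starts an
occurrence `(a - 1) π_j π_k` of 231 with a smaller first entry. If `π_{i+1} < a`, then
either `π_{i+1} < π_k` and `π_i π_{i+1} π_j π_k` is a 3142, or `π_{i+1} π_j π_k` is again a
smaller 231.
-/

theorem seqContains_iff_exists_orderEmbedding {α β : List ℕ} :
    SeqContains α β ↔ ∃ f : Fin β.length ↪o Fin α.length,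
      ∀ m m', β.get m < β.get m' ↔ α.get (f m) < α.get (f m') := by
  constructor
  · rintro ⟨γ, hsub, hlen, hord⟩
    obtain ⟨g, hg⟩ := List.sublist_iff_exists_fin_orderEmbedding_get_eq.mp hsub
    refine ⟨(Fin.castOrderIso hlen.symm).toOrderEmbedding.trans g, fun m m' => ?_⟩
    have hm : (m : ℕ) < γ.length := by omega
    have hm' : (m' : ℕ) < γ.length := by omega
    have := hord m m' hm hm'
    rw [List.getD_eq_getElem _ _ hm, List.getD_eq_getElem _ _ hm',
      List.getD_eq_getElem _ _ m.2, List.getD_eq_getElem _ _ m'.2] at this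
    change _ ↔ α.get (g (Fin.cast hlen.symm m)) < α.get (g (Fin.cast hlen.symm m'))
    rw [← hg, ← hg]
    exact this.symm
  · rintro ⟨f, hf⟩
    refine ⟨List.ofFn fun m => α.get (f m), ?_, List.length_ofFn, fun i j hi hj => ?_⟩
    · exact List.sublist_iff_exists_fin_orderEmbedding_get_eq.mpr
        ⟨(Fin.castOrderIso List.length_ofFn).toOrderEmbedding.trans f, fun ix => by simp; rfl⟩
    · rw [List.length_ofFn] at hi hj
      rw [List.getD_eq_getElem _ _ (by simpa using hi),
        List.getD_eq_getElem _ _ (by simpa using hj),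
        List.getD_eq_getElem _ _ hi, List.getD_eq_getElem _ _ hj]
      simpa using (hf ⟨i, hi⟩ ⟨j, hj⟩).symm

def Has231With (π : List ℕ) (a : ℕ) : Prop :=
  ∃ i j k, i < j ∧ j < k ∧ k < π.length ∧
    π.getD i 0 = a ∧ π.getD k 0 < a ∧ a < π.getD j 0

theorem SeqContains.exists_has231With {π : List ℕ} (h : SeqContains π [2, 3, 1]) :
    ∃ a, Has231With π a := by
  obtain ⟨f, hf⟩ := seqContains_iff_exists_orderEmbedding.mp h
  have h20 := (hf 2 0).mp (by decide)
  have h01 := (hf 0 1).mp (by decide)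
  simp only [List.get_eq_getElem, ← List.getD_eq_getElem _ 0] at h20 h01
  exact ⟨_, f 0, f 1, f 2, f.strictMono (by decide), f.strictMono (by decide), (f 2).2, rfl,
    h20, h01⟩

theorem seqContains_3142_of_lt {π : List ℕ} {p q r s : ℕ} (hpq : p < q) (hqr : q < r)
    (hrs : r < s) (hs : s < π.length) (hqs : π.getD q 0 < π.getD s 0)
    (hsp : π.getD s 0 < π.getD p 0) (hpr : π.getD p 0 < π.getD r 0) :
    SeqContains π [3, 1, 4, 2] := by
  have hr : r < π.length := by omega
  have hq : q < π.length := by omega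
  have hp : p < π.length := by omega
  let idx : Fin 4 → Fin π.length := ![⟨p, hp⟩, ⟨q, hq⟩, ⟨r, hr⟩, ⟨s, hs⟩]
  have hmono : StrictMono idx := Fin.strictMono_iff_lt_succ.mpr fun m => by
    fin_cases m <;> simpa [idx, Fin.lt_def]
  refine seqContains_iff_exists_orderEmbedding.mpr
    ⟨OrderEmbedding.ofStrictMono idx hmono, fun m m' => ?_⟩
  simp only [List.getD_eq_getElem _ _ hp, List.getD_eq_getElem _ _ hq,
    List.getD_eq_getElem _ _ hr, List.getD_eq_getElem _ _ hs] at hqs hsp hpr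
  fin_cases m <;> fin_cases m' <;> simp [idx] <;> omega

namespace IsPermList

variable {n : ℕ} {π : List ℕ}

theorem getD_mem_Icc (hπ : IsPermList n π) {i : ℕ} (hi : i < π.length) :
    π.getD i 0 ∈ Set.Icc 1 n := by
  have hmem : π.getD i 0 ∈ List.range' 1 n :=
    List.Perm.subset hπ (List.getD_eq_getElem π 0 hi ▸ List.getElem_mem hi)
  rw [List.mem_range'_1] at hmem
  exact ⟨hmem.1, by omega⟩

theorem exists_getD_eq (hπ : IsPermList n π) {v : ℕ} (hv : v ∈ Set.Icc 1 n) :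
    ∃ p < π.length, π.getD p 0 = v := by
  have hmem : v ∈ π := List.Perm.subset hπ.symm (List.mem_range'_1.mpr ⟨hv.1, by grind⟩)
  obtain ⟨p, hp, rfl⟩ := List.mem_iff_getElem.mp hmem
  exact ⟨p, hp, List.getD_eq_getElem π 0 hp⟩

theorem getD_inj (hπ : IsPermList n π) {i j : ℕ} (hi : i < π.length) (hj : j < π.length)
    (h : π.getD i 0 = π.getD j 0) : i = j := by
  have hnodup : π.Nodup := hπ.nodup_iff.mpr List.nodup_range'
  rw [List.getD_eq_getElem π 0 hi, List.getD_eq_getElem π 0 hj] at h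
  exact hnodup.getElem_inj_iff.mp h

end IsPermList

section

variable {n : ℕ} {π : List ℕ} {i j k : ℕ}

theorem has231With_pred_of_ascent (hπ : IsPermList n π) (hf : FishburnFree π)
    (hij : i < j) (hjk : j < k) (hk : k < π.length)
    (hvk : π.getD k 0 < π.getD i 0) (hvj : π.getD i 0 < π.getD j 0)
    (hasc : π.getD i 0 < π.getD (i + 1) 0) : Has231With π (π.getD i 0 - 1) := by
  have hi : i < π.length := by omega
  have hk1 := (hπ.getD_mem_Icc hk).1
  have hin := (hπ.getD_mem_Icc hi).2
  obtain ⟨p, hp, hpv⟩ := hπ.exists_getD_eq (v := π.getD i 0 - 1) ⟨by omega, by omega⟩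
  have hp_ne_i : p ≠ i := fun h => by rw [h] at hpv; omega
  have hp_ne_succ : p ≠ i + 1 := fun h => by rw [h] at hpv; omega
  have hp_lt : p < i := by
    by_contra!
    exact hf ⟨i, p, by omega, hp, by omega, hasc⟩
  have hk_ne : π.getD k 0 ≠ π.getD i 0 - 1 := fun h =>
    hf ⟨i, k, by omega, hk, by omega, hasc⟩
  exact ⟨p, j, k, by omega, hjk, hk, hpv, by omega, by omega⟩

theorem seqContains_3142_or_has231With_of_descent (hπ : IsPermList n π)
    (hij : i < j) (hjk : j < k) (hk : k < π.length)
    (hvk : π.getD k 0 < π.getD i 0) (hvj : π.getD i 0 < π.getD j 0)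
    (hdesc : π.getD (i + 1) 0 < π.getD i 0) :
    SeqContains π [3, 1, 4, 2] ∨ Has231With π (π.getD (i + 1) 0) := by
  have hj : i + 1 < j := lt_of_le_of_ne hij fun h => by rw [← h] at hvj; omega
  have hne : π.getD (i + 1) 0 ≠ π.getD k 0 := fun h => by
    have := hπ.getD_inj (by omega) hk h
    omega
  rcases Nat.lt_or_gt_of_ne hne with hlt | hgt
  · exact .inl (seqContains_3142_of_lt (Nat.lt_succ_self i) hj hjk hk hlt hvk (by omega))
  · exact .inr ⟨i + 1, j, k, hj, hjk, hk, rfl, hgt, by omega⟩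

theorem seqContains_3142_of_has231With (hπ : IsPermList n π) (hf : FishburnFree π) {a : ℕ}
    (h : Has231With π a) : SeqContains π [3, 1, 4, 2] := by
  induction a using Nat.strong_induction_on with
  | _ a ih =>
    obtain ⟨i, j, k, hij, hjk, hk, rfl, hvk, hvj⟩ := h
    rcases lt_trichotomy (π.getD (i + 1) 0) (π.getD i 0) with hdesc | heq | hasc
    · exact (seqContains_3142_or_has231With_of_descent hπ hij hjk hk hvk hvj hdesc).elim id
        (ih _ hdesc)
    · exact absurd (hπ.getD_inj (by omega) (by omega) heq) (by omega)
    · exact ih _ (by omega) (has231With_pred_of_ascent hπ hf hij hjk hk hvk hvj hasc)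

end

/-- If a permutation `π` contains the pattern 231 but contains no copy of the
Fishburn pattern `f`, then `π` contains the pattern 3142. -/
theorem stmt0 {n : ℕ} (π : List ℕ) (hπ : IsPermList n π)
    (h231 : SeqContains π [2, 3, 1]) (hf : FishburnFree π) :
    SeqContains π [3, 1, 4, 2] := by
  obtain ⟨a, ha⟩ := h231.exists_has231With
  exact seqContains_3142_of_has231With hπ hf ha
end

section
/- For any permutations σ_1,…,σ_k, the following are equivalent: (i) F_n(σ_1,…,σ_k) = S_n(231, σ_1,…,σ_k) for all n ≥ 0; (ii) at least one of σ_1,…,σ_k is contained in the permutation 3142. -/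
/-!
In a Fishburn permutation every copy of 231 forces a copy of 3142. Among the copies `π_p π_q π_r`
of 231 one can always pass to one with `π_p = π_r + 1`: if the gap is larger, the entry with value
`π_p - 1` gives a copy with smaller gap (if it lies left of `π_q`) or with gap one (if it lies right
of `π_q`). For such a copy, `π_{p+1} < π_p` since otherwise `π_p, π_{p+1}, π_r` is a copy of `f`;
hence `π_p π_{p+1} π_q π_r` is a copy of 3142. Conversely every copy of `f` is a copy of 231, and
3142 itself is a Fishburn permutation containing 231.
-/

def IsOccurrence (l p : List ℕ) (f : ℕ → ℕ) : Prop :=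
  (∀ i j, j < p.length → i < j → f i < f j) ∧
  (∀ i, i < p.length → f i < l.length) ∧
  ∀ i j, i < p.length → j < p.length →
    (l.getD (f i) 0 < l.getD (f j) 0 ↔ p.getD i 0 < p.getD j 0)

theorem seqContains_iff_exists_isOccurrence (l p : List ℕ) :
    SeqContains l p ↔ ∃ f, IsOccurrence l p f := by
  constructor
  · rintro ⟨γ, hsub, hlen, hrel⟩
    obtain ⟨e, he⟩ := List.sublist_iff_exists_fin_orderEmbedding_get_eq.mp hsub
    have hget (i : ℕ) (hi : i < γ.length) : l.getD (e ⟨i, hi⟩) 0 = γ.getD i 0 := by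
      rw [List.getD_eq_getElem _ 0 (e ⟨i, hi⟩).2, List.getD_eq_getElem _ 0 hi]
      exact (he ⟨i, hi⟩).symm
    refine ⟨fun i => if h : i < γ.length then e ⟨i, h⟩ else 0, ?_, ?_, ?_⟩ <;> rw [← hlen]
    · intro i j hj hij
      simp only [dif_pos (hij.trans hj), dif_pos hj]
      exact e.strictMono (Fin.mk_lt_mk.mpr hij)
    · intro i hi
      simp only [dif_pos hi, Fin.is_lt]
    · intro i j hi hj
      simp only [dif_pos hi, dif_pos hj, hget]
      exact hrel i j hi hj
  · rintro ⟨f, hmono, hbd, hrel⟩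
    refine ⟨(List.range p.length).map (fun i => l.getD (f i) 0), ?_, by simp, ?_⟩
    · -- extend `f` beyond `p.length` to a strictly monotone map of all of `ℕ`
      have hsm : StrictMono (fun i => if i < p.length then f i else i + l.length) := by
        intro i j hij
        dsimp only
        split_ifs with hi hj hj
        · exact hmono i j hj hij
        · exact (hbd i hi).trans_le (Nat.le_add_left _ _)
        · omega
        · omega
      apply List.sublist_of_orderEmbedding_getElem?_eq (OrderEmbedding.ofStrictMono _ hsm)
      intro i
      dsimp only [OrderEmbedding.coe_ofStrictMono]
      split_ifs with h
      · rw [List.getElem?_eq_getElem (by simpa using h), List.getElem?_eq_getElem (hbd i h)]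
        simp [List.getElem?_eq_getElem (hbd i h)]
      · rw [List.getElem?_eq_none (by simpa using h), List.getElem?_eq_none (by omega)]
    · intro i j hi hj
      simp only [List.length_map, List.length_range] at hi hj
      simpa [List.getD_eq_getElem _ 0, hi, hj] using hrel i j hi hj

theorem SeqContains.trans {l a b : List ℕ} (hla : SeqContains l a) (hab : SeqContains a b) :
    SeqContains l b := by
  rw [seqContains_iff_exists_isOccurrence] at *
  obtain ⟨f, fmono, fbd, frel⟩ := hla
  obtain ⟨g, gmono, gbd, grel⟩ := hab
  exact ⟨f ∘ g, fun i j hj hij => fmono _ _ (gbd j hj) (gmono i j hj hij),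
    fun i hi => fbd _ (gbd i hi),
    fun i j hi hj => (frel _ _ (gbd i hi) (gbd j hj)).trans (grel i j hi hj)⟩

theorem seqContains_231_of_getD {l : List ℕ} {p q r : ℕ} (hpq : p < q) (hqr : q < r)
    (hr : r < l.length) (hrp : l.getD r 0 < l.getD p 0) (hpq' : l.getD p 0 < l.getD q 0) :
    SeqContains l [2, 3, 1] := by
  rw [seqContains_iff_exists_isOccurrence]
  refine ⟨fun t => [p, q, r].getD t 0, ?_, ?_, ?_⟩
  · intro s t ht hst
    simp only [List.length_cons, List.length_nil] at ht
    interval_cases t <;> interval_cases s <;> simp only [List.getD_cons_zero, List.getD_cons_succ] <;> omega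
  · intro t ht
    simp only [List.length_cons, List.length_nil] at ht
    interval_cases t <;> simp only [List.getD_cons_zero, List.getD_cons_succ] <;> omega
  · intro s t hs ht
    simp only [List.length_cons, List.length_nil] at hs ht
    interval_cases s <;> interval_cases t <;>
      simp only [List.getD_cons_zero, List.getD_cons_succ] <;> omega

theorem seqContains_3142_of_getD {l : List ℕ} {p q r s : ℕ} (hpq : p < q) (hqr : q < r)
    (hrs : r < s) (hs : s < l.length) (hqs : l.getD q 0 < l.getD s 0)
    (hsp : l.getD s 0 < l.getD p 0) (hpr : l.getD p 0 < l.getD r 0) :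
    SeqContains l [3, 1, 4, 2] := by
  rw [seqContains_iff_exists_isOccurrence]
  refine ⟨fun t => [p, q, r, s].getD t 0, ?_, ?_, ?_⟩
  · intro a b hb hab
    simp only [List.length_cons, List.length_nil] at hb
    interval_cases b <;> interval_cases a <;> simp only [List.getD_cons_zero, List.getD_cons_succ] <;> omega
  · intro t ht
    simp only [List.length_cons, List.length_nil] at ht
    interval_cases t <;> simp only [List.getD_cons_zero, List.getD_cons_succ] <;> omega
  · intro a b ha hb
    simp only [List.length_cons, List.length_nil] at ha hb
    interval_cases a <;> interval_cases b <;>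
      simp only [List.getD_cons_zero, List.getD_cons_succ] <;> omega

theorem SeqContains.exists_getD_of_231 {l : List ℕ} (h : SeqContains l [2, 3, 1]) :
    ∃ p q r, p < q ∧ q < r ∧ r < l.length ∧
      l.getD r 0 < l.getD p 0 ∧ l.getD p 0 < l.getD q 0 := by
  obtain ⟨f, fmono, fbd, frel⟩ := (seqContains_iff_exists_isOccurrence l _).mp h
  exact ⟨f 0, f 1, f 2, fmono 0 1 (by simp) one_pos, fmono 1 2 (by simp) one_lt_two,
    fbd 2 (by simp), by simpa using frel 2 0 (by simp) (by simp),
    by simpa using frel 0 1 (by simp) (by simp)⟩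

theorem HasFishburnCopy.seqContains_231 {l : List ℕ} (h : HasFishburnCopy l) :
    SeqContains l [2, 3, 1] := by
  obtain ⟨j, k, hjk, hk, hjk', hj⟩ := h
  exact seqContains_231_of_getD (Nat.lt_succ_self j) hjk hk (by omega) hj

namespace IsPermList

variable {n : ℕ} {l : List ℕ}

theorem getD_mem_Icc_s1 (h : IsPermList n l) {i : ℕ} (hi : i < l.length) :
    l.getD i 0 ∈ Set.Icc 1 n := by
  have hmem : l.getD i 0 ∈ l := by
    rw [List.getD_eq_getElem l 0 hi]
    exact List.getElem_mem hi
  have := h.mem_iff.mp hmem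
  rw [List.mem_range'_1] at this
  exact ⟨this.1, by omega⟩

theorem exists_getD_eq_s1 (h : IsPermList n l) {v : ℕ} (hv : v ∈ Set.Icc 1 n) :
    ∃ m, m < l.length ∧ l.getD m 0 = v := by
  have hmem : v ∈ l := h.mem_iff.mpr (by rw [List.mem_range'_1]; grind)
  obtain ⟨m, hm, he⟩ := List.getElem_of_mem hmem
  exact ⟨m, hm, by rw [List.getD_eq_getElem l 0 hm, he]⟩

theorem getD_ne (h : IsPermList n l) {i j : ℕ} (hi : i < l.length) (hj : j < l.length)
    (hij : i ≠ j) : l.getD i 0 ≠ l.getD j 0 := by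
  rw [List.getD_eq_getElem l 0 hi, List.getD_eq_getElem l 0 hj]
  exact fun he => hij ((h.nodup_iff.mpr List.nodup_range').getElem_inj_iff.mp he)

theorem exists_231_getD_eq_succ_of_231 (h : IsPermList n l) {p q r : ℕ} (hpq : p < q)
    (hqr : q < r) (hr : r < l.length) (hrp : l.getD r 0 < l.getD p 0)
    (hpq' : l.getD p 0 < l.getD q 0) :
    ∃ p q r, p < q ∧ q < r ∧ r < l.length ∧
      l.getD p 0 = l.getD r 0 + 1 ∧ l.getD p 0 < l.getD q 0 := by
  induction hgap : l.getD p 0 - l.getD r 0 using Nat.strong_induction_on generalizing p q r with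
  | _ gap ih =>
    by_cases hone : l.getD p 0 = l.getD r 0 + 1
    · exact ⟨p, q, r, hpq, hqr, hr, hone, hpq'⟩
    have hp : p < l.length := by omega
    obtain ⟨m, hm, hmv⟩ :=
      h.exists_getD_eq_s1 (v := l.getD p 0 - 1) ⟨by omega, by have := (h.getD_mem_Icc_s1 hp).2; omega⟩
    rcases lt_or_gt_of_ne (show m ≠ q by rintro rfl; omega) with hmq | hqm
    · exact ih _ (by omega) hmq hqr hr (by omega) (by omega) rfl
    · exact ih _ (by omega) hpq hqm hm (by omega) hpq' rfl

theorem seqContains_3142_of_231 (h : IsPermList n l) (hf : FishburnFree l)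
    (h231 : SeqContains l [2, 3, 1]) : SeqContains l [3, 1, 4, 2] := by
  obtain ⟨p₀, q₀, r₀, hpq₀, hqr₀, hr₀, hrp₀, hpq₀'⟩ := h231.exists_getD_of_231
  obtain ⟨p, q, r, hpq, hqr, hr, hrp, hpq'⟩ :=
    h.exists_231_getD_eq_succ_of_231 hpq₀ hqr₀ hr₀ hrp₀ hpq₀'
  have hnext : l.getD (p + 1) 0 < l.getD p 0 :=
    lt_of_le_of_ne (not_lt.mp fun hlt => hf ⟨p, r, by omega, hr, hrp, hlt⟩)
      (h.getD_ne (by omega) (by omega) (by omega))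
  have hnext_r : l.getD (p + 1) 0 < l.getD r 0 := by
    have := h.getD_ne (i := p + 1) (j := r) (by omega) hr (by omega)
    omega
  have hpq1 : p + 1 < q := lt_of_le_of_ne hpq (by rintro rfl; omega)
  exact seqContains_3142_of_getD (Nat.lt_succ_self p) hpq1 hqr hr hnext_r (by omega) hpq'

end IsPermList

theorem fishburnFree_3142 : FishburnFree [3, 1, 4, 2] := by
  rintro ⟨j, k, hjk, hk, hval, hasc⟩
  simp only [List.length_cons, List.length_nil] at hk
  have hj : j < 2 := by omega
  interval_cases j <;> interval_cases k <;> simp_all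

theorem stmt1_general (pats : List (List ℕ)) :
    (∀ n : ℕ, FishburnSet n pats = PermSet n ([2, 3, 1] :: pats)) ↔
      (∃ p ∈ pats, SeqContains [3, 1, 4, 2] p) := by
  constructor
  · intro heq
    by_contra! havoid
    have hmem : [3, 1, 4, 2] ∈ FishburnSet 4 pats :=
      ⟨by unfold IsPermList; decide, fishburnFree_3142, havoid⟩
    rw [heq 4] at hmem
    exact hmem.2 _ List.mem_cons_self
      (seqContains_231_of_getD (p := 0) (q := 2) (r := 3) (by simp) (by simp) (by simp)
        (by simp) (by simp))
  · rintro ⟨σ, hσ, hσ3142⟩ n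
    ext l
    simp only [FishburnSet, PermSet, Set.mem_ofPred_eq, List.forall_mem_cons]
    refine ⟨fun ⟨hl, hf, hav⟩ => ⟨hl, fun h231 => hav σ hσ ?_, hav⟩,
      fun ⟨hl, h231, hav⟩ => ⟨hl, fun hcopy => h231 hcopy.seqContains_231, hav⟩⟩
    exact (hl.seqContains_3142_of_231 hf h231).trans hσ3142

/-- For any permutations `σ₁, …, σₖ`, we have `F_n(σ₁,…,σₖ) = S_n(231, σ₁,…,σₖ)`
for all `n ≥ 0` if and only if at least one of `σ₁, …, σₖ` is contained in `3142`. -/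
theorem stmt1 (pats : List (List ℕ)) (hperm : ∀ p ∈ pats, ∃ m, IsPermList m p)
    (hne : pats ≠ []) :
    (∀ n : ℕ, FishburnSet n pats = PermSet n ([2, 3, 1] :: pats)) ↔
      (∃ p ∈ pats, SeqContains [3, 1, 4, 2] p) :=
  stmt1_general pats
end

section
/- For each σ ∈ {132, 213, 312} and all n ≥ 1, the number of Fishburn permutations of length n which avoid σ is 2^{n−1}, i.e. |F_n(σ)| = 2^{n−1}. -/
/-!
An occurrence `π_j π_{j+1} π_k` of the Fishburn pattern is an occurrence of `231`, so every
`231`-avoiding permutation is Fishburn. Conversely, let `π` be Fishburn and avoid `σ`, and take an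
occurrence `b c a` of `231` with `b` as small as possible. If `c` directly follows `b`, the entry
`b - 1` must lie left of `b` (right of it, it would complete a Fishburn copy with `b c`), and then
`(b - 1) c a` is a smaller occurrence. Otherwise look at the entry `d` right after `b`: if `d > b`,
then `b d a` is an occurrence of the first kind, and if `a < d < b`, then `d c a` is smaller; the
remaining case `d < a` yields an occurrence of `σ` for each `σ ∈ {132, 213, 312}`. Hence
`F_n(σ) = Av_n(σ, 231)`.

These classes double from `n` to `n + 1`: in `Av_{n+1}(132, 231)` the maximum stands first or
last, a permutation in `Av_{n+1}(213, 231)` starts with `1` or with its maximum, and in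
`Av_{n+1}(312, 231)` the maximum stands last or directly before `n`. In each of the two cases,
removing the maximum (resp. the leading `1`, lowering the other entries) is a bijection onto
`Av_n`.
-/

def HasTriple (P : ℕ → ℕ → ℕ → Prop) (l : List ℕ) : Prop :=
  ∃ x y z, [x, y, z].Sublist l ∧ P x y z

def Is132 (x y z : ℕ) : Prop := x < z ∧ z < y
def Is213 (x y z : ℕ) : Prop := y < x ∧ x < z
def Is231 (x y z : ℕ) : Prop := z < x ∧ x < y
def Is312 (x y z : ℕ) : Prop := y < z ∧ z < x

lemma sameRelOrder_triple_iff {x y z a b c : ℕ} :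
    SameRelOrder [x, y, z] [a, b, c] ↔
      (x < y ↔ a < b) ∧ (y < x ↔ b < a) ∧ (x < z ↔ a < c) ∧ (z < x ↔ c < a) ∧
        (y < z ↔ b < c) ∧ (z < y ↔ c < b) := by
  constructor
  · rintro ⟨-, h⟩
    exact ⟨h 0 1 (by simp) (by simp), h 1 0 (by simp) (by simp), h 0 2 (by simp) (by simp),
      h 2 0 (by simp) (by simp), h 1 2 (by simp) (by simp), h 2 1 (by simp) (by simp)⟩
  · intro h
    refine ⟨rfl, fun i j hi hj => ?_⟩
    simp only [List.length_cons, List.length_nil] at hi hj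
    interval_cases i <;> interval_cases j <;> simp_all

def IsOrderPattern (P : ℕ → ℕ → ℕ → Prop) : Prop :=
  ∀ x y z x' y' z', SameRelOrder [x, y, z] [x', y', z'] → P x y z → P x' y' z'

lemma isOrderPattern_231 : IsOrderPattern Is231 := fun _ _ _ _ _ _ h => by
  rw [sameRelOrder_triple_iff] at h
  unfold Is231
  omega

lemma isOrderPattern_312 : IsOrderPattern Is312 := fun _ _ _ _ _ _ h => by
  rw [sameRelOrder_triple_iff] at h
  unfold Is312
  omega

lemma isOrderPattern_213 : IsOrderPattern Is213 := fun _ _ _ _ _ _ h => by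
  rw [sameRelOrder_triple_iff] at h
  unfold Is213
  omega

section Triples

variable {P : ℕ → ℕ → ℕ → Prop} {l : List ℕ}

lemma HasTriple.mono {l' : List ℕ} (h : HasTriple P l) (hl : l.Sublist l') : HasTriple P l' :=
  let ⟨x, y, z, hs, hP⟩ := h
  ⟨x, y, z, hs.trans hl, hP⟩

lemma hasTriple_congr {Q : ℕ → ℕ → ℕ → Prop} (h : ∀ x y z, P x y z ↔ Q x y z) :
    HasTriple P l ↔ HasTriple Q l := by
  simp only [HasTriple, h]

lemma not_hasTriple_of_length_lt (h : l.length < 3) : ¬ HasTriple P l := by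
  rintro ⟨x, y, z, hs, -⟩
  have := hs.length_le
  simp only [List.length_cons, List.length_nil] at this
  omega

lemma seqContains_triple_iff {a b c : ℕ} :
    SeqContains l [a, b, c] ↔ HasTriple (fun x y z => SameRelOrder [x, y, z] [a, b, c]) l := by
  constructor
  · rintro ⟨γ, hs, hγ⟩
    obtain ⟨x, y, z, rfl⟩ := List.length_eq_three.mp hγ.1
    exact ⟨x, y, z, hs, hγ⟩
  · rintro ⟨x, y, z, hs, h⟩
    exact ⟨_, hs, h⟩

lemma seqContains_132_iff : SeqContains l [1, 3, 2] ↔ HasTriple Is132 l := by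
  rw [seqContains_triple_iff]
  exact hasTriple_congr fun x y z => by rw [sameRelOrder_triple_iff, Is132]; omega

lemma seqContains_213_iff : SeqContains l [2, 1, 3] ↔ HasTriple Is213 l := by
  rw [seqContains_triple_iff]
  exact hasTriple_congr fun x y z => by rw [sameRelOrder_triple_iff, Is213]; omega

lemma seqContains_312_iff : SeqContains l [3, 1, 2] ↔ HasTriple Is312 l := by
  rw [seqContains_triple_iff]
  exact hasTriple_congr fun x y z => by rw [sameRelOrder_triple_iff, Is312]; omega

lemma triple_sublist_append_cons {u v : List ℕ} {x a z : ℕ} (hx : x ∈ u) (hz : z ∈ v) :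
    [x, a, z].Sublist (u ++ a :: v) :=
  (List.singleton_sublist.mpr hx).append ((List.singleton_sublist.mpr hz).cons_cons a)

lemma hasTriple_reverse_iff : HasTriple P l.reverse ↔ HasTriple (fun x y z => P z y x) l := by
  constructor
  · rintro ⟨x, y, z, hs, hP⟩
    exact ⟨z, y, x, List.reverse_sublist.mp (by simpa using hs), hP⟩
  · rintro ⟨x, y, z, hs, hP⟩
    exact ⟨z, y, x, by simpa using List.reverse_sublist.mpr hs, hP⟩

lemma hasTriple_cons_iff {a : ℕ} (hnew : ∀ y ∈ l, ∀ z ∈ l, ¬ P a y z) :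
    HasTriple P (a :: l) ↔ HasTriple P l := by
  refine ⟨fun ⟨x, y, z, hs, hP⟩ => ?_, fun h => h.mono (l.sublist_cons_self a)⟩
  rcases List.sublist_cons_iff.mp hs with hs | ⟨r, hr, hs⟩
  · exact ⟨x, y, z, hs, hP⟩
  · obtain ⟨rfl, rfl⟩ := List.cons_eq_cons.mp hr
    exact absurd hP (hnew y (hs.subset (by simp)) z (hs.subset (by simp)))

lemma hasTriple_concat_iff {a : ℕ} (hnew : ∀ x ∈ l, ∀ y ∈ l, ¬ P x y a) :
    HasTriple P (l ++ [a]) ↔ HasTriple P l := by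
  have hrev := hasTriple_cons_iff (P := fun x y z => P z y x) (a := a) (l := l.reverse)
    fun y hy z hz => hnew z (List.mem_reverse.mp hz) y (List.mem_reverse.mp hy)
  calc HasTriple P (l ++ [a]) ↔ HasTriple P (a :: l.reverse).reverse := by simp
    _ ↔ HasTriple P l := by
      rw [hasTriple_reverse_iff, hrev, ← l.reverse_reverse, hasTriple_reverse_iff,
        l.reverse_reverse]

lemma hasTriple_cons_of_forall_lt {a : ℕ} (hP : ∀ x y z, P x y z → x < y ∨ x < z)
    (ha : ∀ x ∈ l, x < a) : HasTriple P (a :: l) ↔ HasTriple P l :=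
  hasTriple_cons_iff fun y hy z hz h => by
    have := ha y hy; have := ha z hz; have := hP _ _ _ h; omega

lemma hasTriple_concat_of_forall_lt {a : ℕ} (hP : ∀ x y z, P x y z → z < x ∨ z < y)
    (ha : ∀ x ∈ l, x < a) : HasTriple P (l ++ [a]) ↔ HasTriple P l :=
  hasTriple_concat_iff fun x hx y hy h => by
    have := ha x hx; have := ha y hy; have := hP _ _ _ h; omega

lemma HasTriple.map (hP : IsOrderPattern P) {f : ℕ → ℕ} (h : HasTriple P l)
    (hf : ∀ x ∈ l, ∀ y ∈ l, x < y ↔ f x < f y) : HasTriple P (l.map f) := by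
  obtain ⟨x, y, z, hs, hxyz⟩ := h
  have hx := hs.subset (by simp : x ∈ [x, y, z])
  have hy := hs.subset (by simp : y ∈ [x, y, z])
  have hz := hs.subset (by simp : z ∈ [x, y, z])
  refine ⟨f x, f y, f z, hs.map f, hP _ _ _ _ _ _ ?_ hxyz⟩
  rw [sameRelOrder_triple_iff]
  exact ⟨hf x hx y hy, hf y hy x hx, hf x hx z hz, hf z hz x hx, hf y hy z hz, hf z hz y hy⟩

lemma hasTriple_map_succ_iff (hP : IsOrderPattern P) :
    HasTriple P (l.map (· + 1)) ↔ HasTriple P l := by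
  refine ⟨fun h => ?_, fun h => h.map hP fun _ _ _ _ => Nat.add_lt_add_iff_right.symm⟩
  simpa [Function.comp_def] using h.map hP (f := (· - 1)) (by simp)

lemma hasTriple_one_cons_map_succ_iff (hP : IsOrderPattern P)
    (hP₁ : ∀ x y z, P x y z → y < x ∨ z < x) :
    HasTriple P (1 :: l.map (· + 1)) ↔ HasTriple P l := by
  refine (hasTriple_cons_iff fun y hy z hz h => ?_).trans (hasTriple_map_succ_iff hP)
  simp only [List.mem_map] at hy hz
  obtain ⟨y, -, rfl⟩ := hy
  obtain ⟨z, -, rfl⟩ := hz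
  have := hP₁ _ _ _ h
  omega

lemma HasTriple.of_append_cons_succ (hP : IsOrderPattern P) {u v : List ℕ} {a : ℕ}
    (hlt : ∀ x ∈ u ++ v, x < a) (h : HasTriple P (u ++ (a + 1) :: v)) :
    HasTriple P (u ++ a :: v) := by
  have hne : ∀ w ∈ u ++ (a + 1) :: v, w ≠ a := fun w hw => by
    rcases List.mem_cons.mp (List.perm_middle.subset hw) with rfl | hw
    · omega
    · exact (hlt w hw).ne
  have hmap := h.map hP (f := fun w => if w = a + 1 then a else w) fun w hw w' hw' => by
    have := hne w hw
    have := hne w' hw'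
    split_ifs <;> omega
  have hid : ∀ m : List ℕ, (∀ w ∈ m, w < a) →
      m.map (fun w => if w = a + 1 then a else w) = m := fun m hm =>
    (List.map_inj_left.mpr fun w hw => if_neg (by have := hm w hw; omega)).trans (List.map_id' m)
  rwa [List.map_append, List.map_cons, if_pos rfl, hid u fun w hw => hlt w (by simp [hw]),
    hid v fun w hw => hlt w (by simp [hw])] at hmap

lemma hasTriple_twin_iff (hP : IsOrderPattern P) (h132 : ¬ P 1 3 2) (h321 : ¬ P 3 2 1)
    {u v : List ℕ} {a : ℕ} (hlt : ∀ x ∈ u ++ v, x < a) :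
    HasTriple P (u ++ (a + 1) :: a :: v) ↔ HasTriple P (u ++ a :: v) := by
  refine ⟨fun ⟨x, y, z, hs, hxyz⟩ => ?_,
    fun h => h.mono ((List.sublist_cons_self _ _).append_left u)⟩
  obtain ⟨t₁, t₂, ht, h₁, h₂⟩ := List.sublist_append_iff.mp hs
  rcases List.sublist_cons_iff.mp h₂ with h₂ | ⟨r, rfl, hr⟩
  · exact ⟨x, y, z, ht ▸ h₁.append h₂, hxyz⟩
  rcases List.sublist_cons_iff.mp hr with hr | ⟨r, rfl, hr₂⟩
  · exact .of_append_cons_succ hP hlt ⟨x, y, z, ht ▸ h₁.append (hr.cons_cons _), hxyz⟩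
  -- a triple through both `a + 1` and `a` is an occurrence of `132` or of `321`
  have hz : ∀ w ∈ r, w < a := fun w hw => hlt w (List.mem_append_right _ (hr₂.subset hw))
  have hx : ∀ w ∈ t₁, w < a := fun w hw => hlt w (List.mem_append_left _ (h₁.subset hw))
  rcases t₁ with _ | ⟨p, _ | ⟨q, t₁⟩⟩
  · simp only [List.nil_append, List.cons.injEq] at ht
    obtain ⟨rfl, rfl, rfl⟩ := ht
    have := hz z (by simp)
    exact absurd (hP _ _ _ _ _ _ (by rw [sameRelOrder_triple_iff]; omega) hxyz) h321
  · simp only [List.cons_append, List.nil_append, List.cons.injEq] at ht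
    obtain ⟨rfl, rfl, rfl, -⟩ := ht
    have := hx x (by simp)
    exact absurd (hP _ _ _ _ _ _ (by rw [sameRelOrder_triple_iff]; omega) hxyz) h132
  · have := congrArg List.length ht
    simp at this
    omega

end Triples

section Permutations

variable {n : ℕ} {l u v : List ℕ}

lemma IsPermList.nodup (h : IsPermList n l) : l.Nodup :=
  List.Perm.nodup_iff h |>.mpr List.nodup_range'

lemma IsPermList.mem_iff (h : IsPermList n l) {x : ℕ} : x ∈ l ↔ 1 ≤ x ∧ x ≤ n := by
  rw [List.Perm.mem_iff h, List.mem_range'_1]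
  omega

lemma IsPermList.getD_mem_Icc_s2 (h : IsPermList n l) {i : ℕ} (hi : i < l.length) :
    1 ≤ l.getD i 0 ∧ l.getD i 0 ≤ n := by
  rw [List.getD_eq_getElem _ _ hi]
  exact h.mem_iff.mp (List.getElem_mem hi)

lemma IsPermList.getD_inj_s2 (h : IsPermList n l) {i j : ℕ} (hi : i < l.length)
    (hj : j < l.length) (he : l.getD i 0 = l.getD j 0) : i = j := by
  rw [List.getD_eq_getElem _ _ hi, List.getD_eq_getElem _ _ hj] at he
  exact h.nodup.getElem_inj_iff.mp he

lemma IsPermList.exists_getD_eq_s2 (h : IsPermList n l) {x : ℕ} (h1 : 1 ≤ x) (h2 : x ≤ n) :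
    ∃ m < l.length, l.getD m 0 = x := by
  obtain ⟨m, hm, rfl⟩ := List.mem_iff_getElem.mp (h.mem_iff.mpr ⟨h1, h2⟩)
  exact ⟨m, hm, List.getD_eq_getElem _ _ hm⟩

lemma range'_one_succ_perm (n : ℕ) :
    (List.range' 1 (n + 1)).Perm ((n + 1) :: List.range' 1 n) := by
  rw [List.range'_concat, Nat.one_mul, Nat.add_comm]
  exact List.perm_append_singleton _ _

lemma isPermList_succ_iff_of_perm {l' : List ℕ} (h : l'.Perm ((n + 1) :: l)) :
    IsPermList (n + 1) l' ↔ IsPermList n l := by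
  rw [IsPermList, h.congr_left, (range'_one_succ_perm n).congr_right, List.perm_cons]
  rfl

lemma isPermList_one_cons_map_succ_iff :
    IsPermList (n + 1) (1 :: l.map (· + 1)) ↔ IsPermList n l := by
  rw [IsPermList, List.range'_succ, List.perm_cons, List.range'_succ_left]
  exact List.map_perm_map_iff (add_left_injective 1)

lemma IsPermList.forall_lt_succ (h : IsPermList n l) : ∀ x ∈ l, x < n + 1 :=
  fun _ hx => Nat.lt_succ_of_le (h.mem_iff.mp hx).2

lemma IsPermList.forall_lt_of_append_cons (h : IsPermList n (u ++ n :: v)) :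
    ∀ x ∈ u ++ v, x < n := fun x hx => by
  have hnd := List.nodup_middle.mp h.nodup
  have := h.mem_iff.mp (List.perm_middle.symm.subset (List.mem_cons_of_mem n hx))
  have : x ≠ n := by rintro rfl; exact (List.nodup_cons.mp hnd).1 hx
  omega

lemma IsPermList.not_mem_of_append_cons {a : ℕ} (h : IsPermList n (u ++ a :: v)) : a ∉ u :=
  fun ha => (List.nodup_append.mp h.nodup).2.2 a ha a List.mem_cons_self rfl

lemma IsPermList.succ_mem (h : IsPermList (n + 1) l) : n + 1 ∈ l :=
  h.mem_iff.mpr ⟨by omega, le_rfl⟩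

lemma IsPermList.exists_eq_map_succ {t : List ℕ} (h : IsPermList (n + 1) (1 :: t)) :
    ∃ t' : List ℕ, t = t'.map (· + 1) := by
  refine ⟨t.map (· - 1), ?_⟩
  rw [List.map_map]
  refine ((List.map_inj_left.mpr fun x hx => ?_).trans (List.map_id' t)).symm
  have := (h.mem_iff (x := x)).mp (List.mem_cons_of_mem 1 hx)
  have : x ≠ 1 := by rintro rfl; exact (List.nodup_cons.mp h.nodup).1 hx
  simp only [Function.comp_apply]
  omega

end Permutations

section Fishburn

variable {n : ℕ} {l : List ℕ}

lemma sublist_getD_triple {i j k : ℕ} (hij : i < j) (hjk : j < k) (hk : k < l.length) :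
    [l.getD i 0, l.getD j 0, l.getD k 0].Sublist l := by
  have := List.map_getElem_sublist (l := l)
    (is := [⟨i, by omega⟩, ⟨j, by omega⟩, ⟨k, hk⟩])
    (by simp [List.pairwise_cons]; omega)
  simpa [List.getD_eq_getElem, *, show i < l.length by omega, show j < l.length by omega]
    using this

lemma exists_getD_of_triple_sublist {x y z : ℕ} (h : [x, y, z].Sublist l) :
    ∃ i j k, i < j ∧ j < k ∧ k < l.length ∧
      l.getD i 0 = x ∧ l.getD j 0 = y ∧ l.getD k 0 = z := by
  obtain ⟨is, he, hp⟩ := List.sublist_eq_map_getElem h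
  obtain ⟨i, j, k, rfl⟩ := List.length_eq_three.mp (by simpa using congrArg List.length he.symm)
  simp only [List.map_cons, List.map_nil, List.cons.injEq, and_true] at he
  simp only [List.pairwise_cons, List.mem_cons] at hp
  refine ⟨i, j, k, hp.1 j (by simp), hp.2.1 k (by simp), k.isLt, ?_, ?_, ?_⟩ <;>
    simp [he]

def IsCopy231 (l : List ℕ) (i j k : ℕ) : Prop :=
  i < j ∧ j < k ∧ k < l.length ∧ l.getD k 0 < l.getD i 0 ∧ l.getD i 0 < l.getD j 0

lemma hasTriple_231_iff : HasTriple Is231 l ↔ ∃ i j k, IsCopy231 l i j k := by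
  constructor
  · rintro ⟨x, y, z, hs, h⟩
    obtain ⟨i, j, k, hij, hjk, hk, rfl, rfl, rfl⟩ := exists_getD_of_triple_sublist hs
    exact ⟨i, j, k, hij, hjk, hk, h⟩
  · rintro ⟨i, j, k, hij, hjk, hk, h⟩
    exact ⟨_, _, _, sublist_getD_triple hij hjk hk, h⟩

lemma fishburnFree_of_not_hasTriple_231 (h : ¬ HasTriple Is231 l) : FishburnFree l := by
  rintro ⟨j, k, hjk, hk, he, hlt⟩
  exact h (hasTriple_231_iff.mpr ⟨j, j + 1, k, by omega, hjk, hk, by omega, hlt⟩)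

def NoDip231 (l : List ℕ) : Prop :=
  ∀ i j k, IsCopy231 l i j k → i + 1 < j → l.getD k 0 ≤ l.getD (i + 1) 0

lemma noDip231_of_not_hasTriple_132 (h : ¬ HasTriple Is132 l) : NoDip231 l := by
  intro i j k ⟨_, hjk, hk, hki, hij⟩ hsep
  by_contra! hlt
  exact h ⟨_, _, _, sublist_getD_triple hsep hjk hk, hlt, by omega⟩

lemma noDip231_of_not_hasTriple_213 (h : ¬ HasTriple Is213 l) : NoDip231 l := by
  intro i j k ⟨_, hjk, hk, hki, hij⟩ hsep
  by_contra! hlt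
  exact h ⟨_, _, _, sublist_getD_triple (by omega) hsep (by omega), by omega, hij⟩

lemma noDip231_of_not_hasTriple_312 (h : ¬ HasTriple Is312 l) : NoDip231 l := by
  intro i j k ⟨_, hjk, hk, hki, hij⟩ hsep
  by_contra! hlt
  exact h ⟨_, _, _, sublist_getD_triple (by omega) (by omega) hk, hlt, hki⟩

lemma IsCopy231.exists_lt_of_adjacent (hp : IsPermList n l) (hf : FishburnFree l) {i k : ℕ}
    (h : IsCopy231 l i (i + 1) k) :
    ∃ i' j' k', IsCopy231 l i' j' k' ∧ l.getD i' 0 < l.getD i 0 := by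
  obtain ⟨-, hjk, hk, hki, hij⟩ := h
  have hk1 := (hp.getD_mem_Icc_s2 hk).1
  have hin := (hp.getD_mem_Icc_s2 (show i < l.length by omega)).2
  obtain ⟨m, hm, hmv⟩ := hp.exists_getD_eq_s2 (x := l.getD i 0 - 1) (by omega) (by omega)
  rcases Nat.lt_or_ge m i with hmi | hmi
  · have hkm : l.getD k 0 ≠ l.getD m 0 := fun he => by
      have := hp.getD_inj_s2 hk hm he
      omega
    exact ⟨m, i + 1, k, ⟨by omega, hjk, hk, by omega, by omega⟩, by omega⟩
  · have : m ≠ i := by rintro rfl; omega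
    have : m ≠ i + 1 := by rintro rfl; omega
    exact absurd ⟨i, m, by omega, hm, by omega, hij⟩ hf

lemma IsCopy231.exists_lt (hp : IsPermList n l) (hf : FishburnFree l) (hd : NoDip231 l)
    {i j k : ℕ} (h : IsCopy231 l i j k) :
    ∃ i' j' k', IsCopy231 l i' j' k' ∧ l.getD i' 0 < l.getD i 0 := by
  have ⟨_, hjk, hk, hki, hij⟩ := h
  obtain rfl | hsep := (show j = i + 1 ∨ i + 1 < j by omega)
  · exact h.exists_lt_of_adjacent hp hf
  have hdip := hd i j k h hsep
  have hne_k : l.getD (i + 1) 0 ≠ l.getD k 0 := fun he => by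
    have := hp.getD_inj_s2 (by omega) hk he
    omega
  have hne_i : l.getD (i + 1) 0 ≠ l.getD i 0 := fun he => by
    have := hp.getD_inj_s2 (by omega) (by omega) he
    omega
  rcases lt_or_gt_of_ne hne_i with hlt | hgt
  · exact ⟨i + 1, j, k, ⟨hsep, hjk, hk, by omega, by omega⟩, hlt⟩
  · exact IsCopy231.exists_lt_of_adjacent hp hf ⟨by omega, by omega, hk, hki, hgt⟩

lemma not_hasTriple_231_of_fishburnFree (hp : IsPermList n l) (hf : FishburnFree l)
    (hd : NoDip231 l) : ¬ HasTriple Is231 l := by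
  rw [hasTriple_231_iff]
  rintro ⟨i, j, k, h⟩
  induction hv : l.getD i 0 using Nat.strong_induction_on generalizing i j k with
  | _ v ih =>
    obtain ⟨i', j', k', h', hlt⟩ := h.exists_lt hp hf hd
    exact ih _ (hv ▸ hlt) _ _ _ h' rfl

end Fishburn

def Av231 (n : ℕ) (P : ℕ → ℕ → ℕ → Prop) : Set (List ℕ) :=
  {l | IsPermList n l ∧ ¬ HasTriple P l ∧ ¬ HasTriple Is231 l}

theorem fishburnSet_eq_av231 {σ : List ℕ} {P : ℕ → ℕ → ℕ → Prop}
    (hσ : ∀ l, SeqContains l σ ↔ HasTriple P l) (hd : ∀ l, ¬ HasTriple P l → NoDip231 l)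
    (n : ℕ) : FishburnSet n [σ] = Av231 n P := by
  ext l
  simp only [FishburnSet, Av231, Set.mem_ofPred_eq, List.mem_singleton, forall_eq, hσ]
  constructor
  · rintro ⟨hp, hf, hP⟩
    exact ⟨hp, hP, not_hasTriple_231_of_fishburnFree hp hf (hd l hP)⟩
  · rintro ⟨hp, hP, h231⟩
    exact ⟨hp, fishburnFree_of_not_hasTriple_231 h231, hP⟩

section Av231

variable {n : ℕ} {P : ℕ → ℕ → ℕ → Prop} {l u v : List ℕ}

lemma av231_finite (n : ℕ) (P : ℕ → ℕ → ℕ → Prop) : (Av231 n P).Finite :=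
  (List.range' 1 n).permutations.finite_toSet.subset fun _ hl => List.mem_permutations.mpr hl.1

lemma ncard_av231_one (P : ℕ → ℕ → ℕ → Prop) : (Av231 1 P).ncard = 1 := by
  refine Set.ncard_eq_one.mpr ⟨[1], Set.ext fun l =>
    ⟨fun hl => List.perm_singleton.mp hl.1, ?_⟩⟩
  rintro rfl
  exact ⟨List.Perm.refl _, not_hasTriple_of_length_lt (by simp),
    not_hasTriple_of_length_lt (by simp)⟩

lemma cons_mem_av231_iff (hP : ∀ x y z, P x y z → x < y ∨ x < z) :
    (n + 1) :: l ∈ Av231 (n + 1) P ↔ l ∈ Av231 n P := by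
  simp only [Av231, Set.mem_ofPred_eq, isPermList_succ_iff_of_perm (List.Perm.refl _)]
  refine and_congr_right fun hp => ?_
  rw [hasTriple_cons_of_forall_lt hP hp.forall_lt_succ,
    hasTriple_cons_of_forall_lt (fun _ _ _ h => Or.inl h.2) hp.forall_lt_succ]

lemma concat_mem_av231_iff (hP : ∀ x y z, P x y z → z < x ∨ z < y) :
    l ++ [n + 1] ∈ Av231 (n + 1) P ↔ l ∈ Av231 n P := by
  simp only [Av231, Set.mem_ofPred_eq,
    isPermList_succ_iff_of_perm (List.perm_append_singleton _ _)]
  refine and_congr_right fun hp => ?_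
  rw [hasTriple_concat_of_forall_lt hP hp.forall_lt_succ,
    hasTriple_concat_of_forall_lt (fun _ _ _ h => Or.inl h.1) hp.forall_lt_succ]

lemma one_cons_map_succ_mem_av231_iff (hP : IsOrderPattern P)
    (hP₁ : ∀ x y z, P x y z → y < x ∨ z < x) :
    1 :: l.map (· + 1) ∈ Av231 (n + 1) P ↔ l ∈ Av231 n P := by
  simp only [Av231, Set.mem_ofPred_eq, isPermList_one_cons_map_succ_iff]
  refine and_congr_right fun _ => ?_
  rw [hasTriple_one_cons_map_succ_iff hP hP₁,
    hasTriple_one_cons_map_succ_iff isOrderPattern_231 fun _ _ _ h => Or.inr h.1]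

lemma twin_mem_av231_iff (hP : IsOrderPattern P) (h132 : ¬ P 1 3 2) (h321 : ¬ P 3 2 1) :
    u ++ (n + 1) :: n :: v ∈ Av231 (n + 1) P ↔ u ++ n :: v ∈ Av231 n P := by
  simp only [Av231, Set.mem_ofPred_eq, isPermList_succ_iff_of_perm List.perm_middle]
  refine and_congr_right fun hp => ?_
  rw [hasTriple_twin_iff hP h132 h321 hp.forall_lt_of_append_cons,
    hasTriple_twin_iff isOrderPattern_231 (by simp [Is231]) (by simp [Is231])
      hp.forall_lt_of_append_cons]

end Av231

section Structure

variable {n : ℕ} {l : List ℕ}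

lemma eq_cons_or_eq_concat_of_mem_av231_132 (hl : l ∈ Av231 (n + 1) Is132) :
    (∃ l', l = (n + 1) :: l') ∨ ∃ l', l = l' ++ [n + 1] := by
  obtain ⟨hp, h132, h231⟩ := hl
  obtain ⟨u, v, rfl⟩ := List.append_of_mem hp.succ_mem
  by_cases hu : u = []
  · exact Or.inl ⟨v, by simp [hu]⟩
  by_cases hv : v = []
  · exact Or.inr ⟨u, by simp [hv]⟩
  obtain ⟨x, hx⟩ := List.exists_mem_of_ne_nil u hu
  obtain ⟨z, hz⟩ := List.exists_mem_of_ne_nil v hv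
  have hxz : x ≠ z := (List.nodup_append.mp hp.nodup).2.2 x hx z (List.mem_cons_of_mem _ hz)
  have hxn := hp.forall_lt_of_append_cons x (List.mem_append_left v hx)
  have hzn := hp.forall_lt_of_append_cons z (List.mem_append_right u hz)
  exfalso
  rcases lt_or_gt_of_ne hxz with h | h
  · exact h132 ⟨x, n + 1, z, triple_sublist_append_cons hx hz, h, hzn⟩
  · exact h231 ⟨x, n + 1, z, triple_sublist_append_cons hx hz, h, hxn⟩

lemma eq_cons_or_eq_one_cons_of_mem_av231_213 (hl : l ∈ Av231 (n + 1) Is213) :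
    (∃ l', l = (n + 1) :: l') ∨ ∃ l', l = 1 :: l' := by
  obtain ⟨hp, h213, h231⟩ := hl
  obtain ⟨u, v, rfl⟩ := List.append_of_mem hp.succ_mem
  rcases u with _ | ⟨x, u⟩
  · exact Or.inl ⟨v, rfl⟩
  by_cases hx : x = 1
  · exact Or.inr ⟨u ++ (n + 1) :: v, by rw [hx, List.cons_append]⟩
  exfalso
  have hxn := hp.forall_lt_of_append_cons x (by simp)
  have hx₁ := (hp.mem_iff (x := x)).mp (by simp)
  have h₁ : 1 ∈ (x :: u) ++ (n + 1) :: v := hp.mem_iff.mpr ⟨le_rfl, by omega⟩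
  simp only [List.cons_append, List.mem_cons, List.mem_append] at h₁
  rcases h₁ with h₁ | h₁ | h₁ | h₁
  · exact hx h₁.symm
  · exact h213 ⟨x, 1, n + 1, ((List.singleton_sublist.mpr h₁).append
      (List.singleton_sublist.mpr List.mem_cons_self)).cons_cons x, by omega, hxn⟩
  · omega
  · exact h231 ⟨x, n + 1, 1, (((List.singleton_sublist.mpr h₁).cons_cons (n + 1)).trans
      (List.sublist_append_right u _)).cons_cons x, by omega, hxn⟩

lemma eq_concat_or_eq_twin_of_mem_av231_312 (hn : 1 ≤ n) (hl : l ∈ Av231 (n + 1) Is312) :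
    (∃ l', l = l' ++ [n + 1]) ∨ ∃ u v, l = u ++ (n + 1) :: n :: v := by
  obtain ⟨hp, h312, h231⟩ := hl
  obtain ⟨u, v, rfl⟩ := List.append_of_mem hp.succ_mem
  rcases v with _ | ⟨y, v⟩
  · exact Or.inl ⟨u, rfl⟩
  by_cases hy : y = n
  · exact Or.inr ⟨u, v, hy ▸ rfl⟩
  exfalso
  have hyn := hp.forall_lt_of_append_cons y (by simp)
  have hn' : n ∈ u ++ (n + 1) :: y :: v := hp.mem_iff.mpr ⟨hn, by omega⟩
  simp only [List.mem_append, List.mem_cons] at hn'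
  rcases hn' with hn' | hn' | hn' | hn'
  · exact h231 ⟨n, n + 1, y, triple_sublist_append_cons hn' List.mem_cons_self, by omega,
      by omega⟩
  · omega
  · exact hy hn'.symm
  · exact h312 ⟨n + 1, y, n, ((((List.singleton_sublist.mpr hn').cons_cons y).cons_cons
      (n + 1)).trans (List.sublist_append_right u _)), by omega, by omega⟩

end Structure

section InsertBefore

variable {α : Type*} [DecidableEq α]

def insertBefore (a b : α) (l : List α) : List α :=
  l.take (l.idxOf b) ++ a :: l.drop (l.idxOf b)

lemma insertBefore_append_cons {a b : α} {u v : List α} (h : b ∉ u) :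
    insertBefore a b (u ++ b :: v) = u ++ a :: b :: v := by
  simp [insertBefore, List.idxOf_append_of_notMem h]

lemma erase_insertBefore {a b : α} {l : List α} (h : a ∉ l) :
    (insertBefore a b l).erase a = l := by
  rw [insertBefore, List.erase_append_right _ fun h' => h (List.mem_of_mem_take h'),
    List.erase_cons_head, List.take_append_drop]

end InsertBefore

lemma ncard_image_union_image {α β : Type*} {s : Set α} {f g : α → β} (hs : s.Finite)
    (hf : s.InjOn f) (hg : s.InjOn g) (hfg : Disjoint (f '' s) (g '' s)) :
    (f '' s ∪ g '' s).ncard = 2 * s.ncard := by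
  rw [Set.ncard_union_eq hfg (hs.image f) (hs.image g), hf.ncard_image,
    hg.ncard_image, two_mul]

lemma ncard_eq_two_pow_of_succ {α : Type*} {S : ℕ → Set α} (h1 : (S 1).ncard = 1)
    (hS : ∀ n, 1 ≤ n → (S (n + 1)).ncard = 2 * (S n).ncard) {n : ℕ} (hn : 1 ≤ n) :
    (S n).ncard = 2 ^ (n - 1) := by
  induction n, hn using Nat.le_induction with
  | base => simpa using h1
  | succ n hn ih => rw [hS n hn, ih, Nat.add_sub_cancel, ← pow_succ', Nat.sub_add_cancel hn]

section Doubling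

variable {n : ℕ}

lemma av231_132_succ : Av231 (n + 1) Is132 =
    List.cons (n + 1) '' Av231 n Is132 ∪ (· ++ [n + 1]) '' Av231 n Is132 := by
  have hcons {l : List ℕ} := cons_mem_av231_iff (n := n) (l := l) (P := Is132)
    fun _ _ _ h => Or.inr h.1
  have hconcat {l : List ℕ} := concat_mem_av231_iff (n := n) (l := l) (P := Is132)
    fun _ _ _ h => Or.inr h.2
  ext l
  refine ⟨fun hl => ?_, ?_⟩
  · rcases eq_cons_or_eq_concat_of_mem_av231_132 hl with ⟨l', rfl⟩ | ⟨l', rfl⟩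
    · exact Or.inl ⟨l', hcons.mp hl, rfl⟩
    · exact Or.inr ⟨l', hconcat.mp hl, rfl⟩
  · rintro (⟨l', hl', rfl⟩ | ⟨l', hl', rfl⟩)
    · exact hcons.mpr hl'
    · exact hconcat.mpr hl'

lemma ncard_av231_132_succ (hn : 1 ≤ n) :
    (Av231 (n + 1) Is132).ncard = 2 * (Av231 n Is132).ncard := by
  refine av231_132_succ ▸ ncard_image_union_image (av231_finite n _) List.cons_injective.injOn
    (List.append_left_injective _).injOn (Set.disjoint_left.mpr ?_)
  rintro _ ⟨l, -, rfl⟩ ⟨l', hl', h⟩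
  rcases l' with _ | ⟨c, l'⟩
  · have := hl'.1.length_eq
    simp only [List.length_nil, List.length_range'] at this
    omega
  · have := (hl'.1.mem_iff (x := c)).mp List.mem_cons_self
    simp only [List.cons_append, List.cons.injEq] at h
    omega

lemma av231_213_succ : Av231 (n + 1) Is213 =
    List.cons (n + 1) '' Av231 n Is213 ∪ (fun l => 1 :: l.map (· + 1)) '' Av231 n Is213 := by
  have hcons {l : List ℕ} := cons_mem_av231_iff (n := n) (l := l) (P := Is213)
    fun _ _ _ h => Or.inr h.2
  have hone {l : List ℕ} := one_cons_map_succ_mem_av231_iff (n := n) (l := l) isOrderPattern_213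
    fun _ _ _ h => Or.inl h.1
  ext l
  refine ⟨fun hl => ?_, ?_⟩
  · rcases eq_cons_or_eq_one_cons_of_mem_av231_213 hl with ⟨l', rfl⟩ | ⟨l', rfl⟩
    · exact Or.inl ⟨l', hcons.mp hl, rfl⟩
    · obtain ⟨l', rfl⟩ := hl.1.exists_eq_map_succ
      exact Or.inr ⟨l', hone.mp hl, rfl⟩
  · rintro (⟨l', hl', rfl⟩ | ⟨l', hl', rfl⟩)
    · exact hcons.mpr hl'
    · exact hone.mpr hl'

lemma ncard_av231_213_succ (hn : 1 ≤ n) :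
    (Av231 (n + 1) Is213).ncard = 2 * (Av231 n Is213).ncard := by
  refine av231_213_succ ▸ ncard_image_union_image (av231_finite n _) List.cons_injective.injOn
    (fun _ _ _ _ h => List.map_injective_iff.mpr (add_left_injective 1) (List.cons_injective h))
    (Set.disjoint_left.mpr ?_)
  rintro _ ⟨l, -, rfl⟩ ⟨l', -, h⟩
  simp only [List.cons.injEq] at h
  omega

lemma av231_312_succ (hn : 1 ≤ n) : Av231 (n + 1) Is312 =
    (· ++ [n + 1]) '' Av231 n Is312 ∪ insertBefore (n + 1) n '' Av231 n Is312 := by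
  have hconcat {l : List ℕ} := concat_mem_av231_iff (n := n) (l := l) (P := Is312)
    fun _ _ _ h => Or.inl h.2
  have htwin {u v : List ℕ} := twin_mem_av231_iff (n := n) (u := u) (v := v) isOrderPattern_312
    (by simp [Is312]) (by simp [Is312])
  ext l
  refine ⟨fun hl => ?_, ?_⟩
  · rcases eq_concat_or_eq_twin_of_mem_av231_312 hn hl with ⟨l', rfl⟩ | ⟨u, v, rfl⟩
    · exact Or.inl ⟨l', hconcat.mp hl, rfl⟩
    · have hl' := htwin.mp hl
      exact Or.inr ⟨_, hl', insertBefore_append_cons hl'.1.not_mem_of_append_cons⟩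
  · rintro (⟨l', hl', rfl⟩ | ⟨l', hl', rfl⟩)
    · exact hconcat.mpr hl'
    · obtain ⟨u, v, rfl⟩ := List.append_of_mem (hl'.1.mem_iff.mpr ⟨hn, le_rfl⟩)
      rw [insertBefore_append_cons hl'.1.not_mem_of_append_cons]
      exact htwin.mpr hl'

lemma ncard_av231_312_succ (hn : 1 ≤ n) :
    (Av231 (n + 1) Is312).ncard = 2 * (Av231 n Is312).ncard := by
  have hfresh {l : List ℕ} (hl : l ∈ Av231 n Is312) : n + 1 ∉ l := fun h => by
    have := (hl.1.mem_iff.mp h).2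
    omega
  refine av231_312_succ hn ▸ ncard_image_union_image (av231_finite n _)
    (List.append_left_injective _).injOn
    (Set.LeftInvOn.injOn (f₁' := (List.erase · (n + 1)))
      fun _ hl => erase_insertBefore (hfresh hl))
    (Set.disjoint_left.mpr ?_)
  rintro _ ⟨l, hl, rfl⟩ ⟨l', hl', h⟩
  obtain ⟨u, v, rfl⟩ := List.append_of_mem (hl'.1.mem_iff.mpr ⟨hn, le_rfl⟩)
  rw [insertBefore_append_cons hl'.1.not_mem_of_append_cons] at h
  have := (List.append_cons_inj_of_notMem (hfresh hl) List.not_mem_nil).mp h.symm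
  simp at this

end Doubling

/-- For each `σ ∈ {132, 213, 312}` we have `|F_n(σ)| = 2 ^ (n - 1)` for all `n ≥ 1`. -/
theorem stmt2 (σ : List ℕ) (hσ : σ = [1, 3, 2] ∨ σ = [2, 1, 3] ∨ σ = [3, 1, 2])
    (n : ℕ) (hn : 1 ≤ n) :
    (FishburnSet n [σ]).ncard = 2 ^ (n - 1) := by
  rcases hσ with rfl | rfl | rfl
  · rw [fishburnSet_eq_av231 (fun _ => seqContains_132_iff)
      (fun _ => noDip231_of_not_hasTriple_132)]
    exact ncard_eq_two_pow_of_succ (S := (Av231 · Is132)) (ncard_av231_one _)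
      (fun _ => ncard_av231_132_succ) hn
  · rw [fishburnSet_eq_av231 (fun _ => seqContains_213_iff)
      (fun _ => noDip231_of_not_hasTriple_213)]
    exact ncard_eq_two_pow_of_succ (S := (Av231 · Is213)) (ncard_av231_one _)
      (fun _ => ncard_av231_213_succ) hn
  · rw [fishburnSet_eq_av231 (fun _ => seqContains_312_iff)
      (fun _ => noDip231_of_not_hasTriple_312)]
    exact ncard_eq_two_pow_of_succ (S := (Av231 · Is312)) (ncard_av231_one _)
      (fun _ => ncard_av231_312_succ) hn
end

section
/- Let β be a binary sequence of length k ≥ 1. Then for all n ≥ 0, the number of binary sequences of length n which avoid β is |B_n(β)| = Σ_{j=0}^{k−1} C(n, j), where C(n,j) is the binomial coefficient. -/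
/-- `l` is a binary sequence: every entry is `0` or `1`. -/
def IsBinarySeq (l : List ℕ) : Prop := ∀ x ∈ l, x = 0 ∨ x = 1

/-!
Split a binary word `c :: t` of length `n + 1` by its first letter: if `c = b` it avoids
`b :: β` iff `t` avoids `β`, otherwise iff `t` avoids `b :: β`. So the number `A(n, k)` of avoiders of any binary pattern of length `k` satisfies
Pascal's recurrence `A(n + 1, k + 1) = A(n, k + 1) + A(n, k)`, with `A(n, 0) = 0` and
`A(0, k + 1) = 1`, which is also satisfied by `∑_{j<k} C(n, j)`.
-/

open Finset

lemma List.cons_sublist_cons_iff_of_ne {α : Type*} {a b : α} (h : a ≠ b) {l t : List α} :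
    (a :: l).Sublist (b :: t) ↔ (a :: l).Sublist t := by
  simp [List.sublist_cons_iff, h]

def binarySeqs (n : ℕ) : Set (List ℕ) := {l | IsBinarySeq l ∧ l.length = n}

lemma isBinarySeq_cons {a : ℕ} {l : List ℕ} :
    IsBinarySeq (a :: l) ↔ (a = 0 ∨ a = 1) ∧ IsBinarySeq l :=
  List.forall_mem_cons

lemma binarySeqs_zero : binarySeqs 0 = {[]} := by
  ext l
  simp +contextual [binarySeqs, IsBinarySeq]

lemma binarySeqs_succ (n : ℕ) :
    binarySeqs (n + 1) = List.cons 0 '' binarySeqs n ∪ List.cons 1 '' binarySeqs n := by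
  ext (_ | ⟨a, t⟩)
  · simp [binarySeqs]
  · simp only [binarySeqs, isBinarySeq_cons, List.length_cons, Set.mem_union, Set.mem_image,
      Set.mem_ofPred_eq, List.cons.injEq]
    aesop

lemma binarySeqs_finite : ∀ n, (binarySeqs n).Finite
  | 0 => by simp [binarySeqs_zero]
  | n + 1 => by
    rw [binarySeqs_succ]
    exact ((binarySeqs_finite n).image _).union ((binarySeqs_finite n).image _)

lemma ncard_sep_binarySeqs_succ (p : List ℕ → Prop) (n : ℕ) :
    {l ∈ binarySeqs (n + 1) | p l}.ncard =
      {t ∈ binarySeqs n | p (0 :: t)}.ncard + {t ∈ binarySeqs n | p (1 :: t)}.ncard := by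
  have hsplit : {l ∈ binarySeqs (n + 1) | p l} =
      List.cons 0 '' {t ∈ binarySeqs n | p (0 :: t)} ∪
        List.cons 1 '' {t ∈ binarySeqs n | p (1 :: t)} := by
    rw [binarySeqs_succ]
    aesop
  have hdisj : Disjoint (List.cons 0 '' {t ∈ binarySeqs n | p (0 :: t)})
      (List.cons 1 '' {t ∈ binarySeqs n | p (1 :: t)}) := by
    rw [Set.disjoint_left]
    aesop
  have hfin := binarySeqs_finite n
  rw [hsplit, Set.ncard_union_eq hdisj ((hfin.sep _).image _) ((hfin.sep _).image _),
    Set.ncard_image_of_injective _ List.cons_injective,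
    Set.ncard_image_of_injective _ List.cons_injective]

lemma ncard_binarySeqs_succ_not_cons_sublist {b : ℕ} (hb : b = 0 ∨ b = 1) (β : List ℕ)
    (n : ℕ) :
    {l ∈ binarySeqs (n + 1) | ¬ (b :: β).Sublist l}.ncard =
      {t ∈ binarySeqs n | ¬ (b :: β).Sublist t}.ncard +
        {t ∈ binarySeqs n | ¬ β.Sublist t}.ncard := by
  rw [ncard_sep_binarySeqs_succ]
  rcases hb with rfl | rfl
  · simp only [List.cons_sublist_cons, List.cons_sublist_cons_iff_of_ne zero_ne_one, add_comm]
  · simp only [List.cons_sublist_cons, List.cons_sublist_cons_iff_of_ne one_ne_zero]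

lemma sum_range_choose_succ (n k : ℕ) :
    ∑ j ∈ range (k + 1), (n + 1).choose j =
      ∑ j ∈ range (k + 1), n.choose j + ∑ j ∈ range k, n.choose j := by
  rw [sum_range_succ' (fun j => (n + 1).choose j), sum_range_succ' (fun j => n.choose j)]
  simp only [Nat.choose_succ_succ, sum_add_distrib, Nat.choose_zero_right]
  ring

theorem ncard_binarySeqs_not_sublist {β : List ℕ} (hβ : IsBinarySeq β) (n : ℕ) :
    {l ∈ binarySeqs n | ¬ β.Sublist l}.ncard = ∑ j ∈ range β.length, n.choose j := by
  induction n generalizing β with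
  | zero =>
    cases β with
    | nil => simp
    | cons b β =>
      rw [binarySeqs_zero, Set.sep_eq_self_iff_mem_true.2 (by simp)]
      simp [sum_range_succ']
  | succ n ih =>
    cases β with
    | nil => simp
    | cons b β =>
      rw [isBinarySeq_cons] at hβ
      rw [ncard_binarySeqs_succ_not_cons_sublist hβ.1, ih (isBinarySeq_cons.2 hβ), ih hβ.2,
        List.length_cons, sum_range_choose_succ]

theorem stmt6_general (k : ℕ) (β : List ℕ) (hβ : IsBinarySeq β)
    (hlen : β.length = k) (n : ℕ) :
    {l : List ℕ | IsBinarySeq l ∧ l.length = n ∧ ¬ β.Sublist l}.ncard =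
      ∑ j ∈ Finset.range k, n.choose j := by
  rw [← hlen, ← ncard_binarySeqs_not_sublist hβ]
  simp only [binarySeqs, Set.mem_ofPred_eq, and_assoc]

/-- Let `β` be a binary sequence of length `k ≥ 1`.  Then for all `n ≥ 0`, the number
of binary sequences of length `n` which avoid `β` (i.e. have no subsequence identical
to `β`) is `Σ_{j=0}^{k-1} C(n, j)`. -/
theorem stmt6 (k : ℕ) (hk : 1 ≤ k) (β : List ℕ) (hβ : IsBinarySeq β)
    (hlen : β.length = k) (n : ℕ) :
    {l : List ℕ | IsBinarySeq l ∧ l.length = n ∧ ¬ β.Sublist l}.ncard =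
      ∑ j ∈ Finset.range k, n.choose j :=
  stmt6_general k β hβ hlen n
end

section
/- Suppose k ≥ 1 and β is an ascent sequence of length k which avoids the pattern 012 and contains at least one entry equal to 1. Then for all n ≥ 1, the number of ascent sequences of length n which avoid both the pattern 012 and the sequence β is |A_n(012, β)| = Σ_{j=0}^{k−2} C(n−1, j), where C(n−1,j) is the binomial coefficient. -/
open Finset

def binaryWords : ℕ → Finset (List ℕ)
  | 0 => {[]}
  | n + 1 => (binaryWords n).image (0 :: ·) ∪ (binaryWords n).image (1 :: ·)

theorem mem_binaryWords {n : ℕ} {l : List ℕ} :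
    l ∈ binaryWords n ↔ l.length = n ∧ ∀ x ∈ l, x ≤ 1 := by
  induction n generalizing l with
  | zero =>
    simp only [binaryWords, mem_singleton, List.length_eq_zero_iff, iff_self_and]
    rintro rfl
    simp
  | succ n ih =>
    cases l with
    | nil => simp [binaryWords]
    | cons a t =>
      simp only [binaryWords, mem_union, mem_image, List.cons.injEq, ih, List.length_cons,
        List.mem_cons, forall_eq_or_imp]
      constructor
      · rintro (⟨_, ⟨hlen, ht⟩, rfl, rfl⟩ | ⟨_, ⟨hlen, ht⟩, rfl, rfl⟩) <;> simp_all
      · rintro ⟨hlen, ha, ht⟩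
        obtain rfl | rfl : a = 0 ∨ a = 1 := by omega
        exacts [.inl ⟨t, ⟨by omega, ht⟩, rfl, rfl⟩, .inr ⟨t, ⟨by omega, ht⟩, rfl, rfl⟩]

theorem card_filter_binaryWords_succ (n : ℕ) (p : List ℕ → Prop) [DecidablePred p] :
    #{l ∈ binaryWords (n + 1) | p l} =
      #{l ∈ binaryWords n | p (0 :: l)} + #{l ∈ binaryWords n | p (1 :: l)} := by
  have hdisj : Disjoint ((binaryWords n).image (0 :: ·)) ((binaryWords n).image (1 :: ·)) := by
    simp [disjoint_left]
  rw [binaryWords, filter_union, card_union_of_disjoint (disjoint_filter_filter hdisj),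
    filter_image, filter_image, card_image_of_injective _ List.cons_injective,
    card_image_of_injective _ List.cons_injective]

theorem List.cons_sublist_cons_of_ne {α : Type*} {a c : α} (h : a ≠ c) {t l : List α} :
    (a :: t).Sublist (c :: l) ↔ (a :: t).Sublist l := by
  simp [List.sublist_cons_iff, h]

theorem sum_range_succ_choose_succ (n m : ℕ) :
    ∑ j ∈ range (m + 1), (n + 1).choose j =
      ∑ j ∈ range m, n.choose j + ∑ j ∈ range (m + 1), n.choose j := by
  rw [sum_range_succ', sum_range_succ' (fun j => n.choose j)]
  simp only [Nat.choose_succ_succ, sum_add_distrib, Nat.choose_zero_right]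
  ring

theorem card_binaryWords_not_sublist (n : ℕ) (w : List ℕ) (hw : ∀ x ∈ w, x ≤ 1) :
    #{l ∈ binaryWords n | ¬ w.Sublist l} = ∑ j ∈ range w.length, n.choose j := by
  induction n generalizing w with
  | zero =>
    cases w with
    | nil => simp
    | cons a t => simp [binaryWords, filter_singleton, sum_range_succ']
  | succ n ih =>
    cases w with
    | nil => simp
    | cons a t =>
      simp only [List.mem_cons, forall_eq_or_imp] at hw
      have ht := ih t hw.2
      have hat := ih (a :: t) (by simpa using hw)
      rw [card_filter_binaryWords_succ, List.length_cons, sum_range_succ_choose_succ]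
      obtain rfl | rfl : a = 0 ∨ a = 1 := by omega
      · simp only [List.cons_sublist_cons, List.cons_sublist_cons_of_ne zero_ne_one, ht, hat,
          List.length_cons]
      · simp only [List.cons_sublist_cons, List.cons_sublist_cons_of_ne one_ne_zero, ht, hat,
          List.length_cons]
        ring

theorem forall_mem_le_iff_forall_getD_le {l : List ℕ} {b : ℕ} :
    (∀ x ∈ l, x ≤ b) ↔ ∀ i, l.getD i 0 ≤ b := by
  refine ⟨fun h i => ?_, fun h x hx => ?_⟩
  · rcases lt_or_ge i l.length with hi | hi
    · rw [List.getD_eq_getElem _ _ hi]; exact h _ (List.getElem_mem hi)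
    · rw [List.getD_eq_default _ _ hi]; exact Nat.zero_le b
  · obtain ⟨i, hi, rfl⟩ := List.getElem_of_mem hx
    rw [← List.getD_eq_getElem _ 0 hi]
    exact h i

theorem getD_take_of_lt {l : List ℕ} {i j : ℕ} (h : i < j) : (l.take j).getD i 0 = l.getD i 0 := by
  simp [List.getD_eq_getElem?_getD, h]

theorem exists_ascent_of_ascCount_pos {l : List ℕ} (h : 0 < ascCount l) :
    ∃ i, i + 1 < l.length ∧ l.getD i 0 < l.getD (i + 1) 0 := by
  obtain ⟨i, hi⟩ := card_pos.mp h
  exact ⟨i, (mem_filter.mp hi).2⟩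

theorem SameRelOrder.refl (u : List ℕ) : SameRelOrder u u := ⟨rfl, fun _ _ _ _ => Iff.rfl⟩

theorem seqContains_of_sublist {l β : List ℕ} (h : β.Sublist l) : SeqContains l β :=
  ⟨β, h, .refl β⟩

theorem seqContains_012_of_lt {l : List ℕ} {i j k : ℕ} (hij : i < j) (hjk : j < k)
    (hk : k < l.length) (h₁ : l.getD i 0 < l.getD j 0) (h₂ : l.getD j 0 < l.getD k 0) :
    SeqContains l [0, 1, 2] := by
  have hsub := List.map_getElem_sublist (l := l)
    (is := [⟨i, by omega⟩, ⟨j, by omega⟩, ⟨k, hk⟩]) (by simp [Fin.mk_lt_mk]; omega)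
  have hj : j < l.length := by omega
  rw [List.getD_eq_getElem _ _ (hij.trans hj), List.getD_eq_getElem _ _ hj] at h₁
  rw [List.getD_eq_getElem _ _ hj, List.getD_eq_getElem _ _ hk] at h₂
  refine ⟨_, hsub, rfl, fun a b ha hb => ?_⟩
  simp only [List.map_cons, List.map_nil, List.length_cons, List.length_nil] at ha hb
  interval_cases a <;> interval_cases b <;> simp <;> omega

theorem not_seqContains_012_of_le_one {l : List ℕ} (hl : ∀ x ∈ l, x ≤ 1) :
    ¬ SeqContains l [0, 1, 2] := by
  rintro ⟨γ, hsub, hlen, hord⟩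
  have hγ := forall_mem_le_iff_forall_getD_le.1 fun x hx => hl x (hsub.subset hx)
  have h₀₁ := (hord 0 1 (by simp [hlen]) (by simp [hlen])).2 (by simp)
  have h₁₂ := (hord 1 2 (by simp [hlen]) (by simp [hlen])).2 (by simp)
  have := hγ 2
  omega

theorem le_one_of_isAscentSeq_of_not_seqContains_012 {l : List ℕ} (ha : IsAscentSeq l)
    (h : ¬ SeqContains l [0, 1, 2]) : ∀ x ∈ l, x ≤ 1 := by
  refine forall_mem_le_iff_forall_getD_le.2 fun j => ?_
  induction j using Nat.strong_induction_on with
  | _ j ih =>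
  rcases lt_or_ge j l.length with hjl | hjl
  swap; · rw [List.getD_eq_default _ _ hjl]; exact zero_le_one
  rcases Nat.eq_zero_or_pos j with rfl | hj
  · rw [ha.1 hjl]; exact zero_le_one
  by_contra! h2
  -- an entry `≥ 2` needs an earlier ascent, and below that entry the ascent can only be `0 < 1`
  obtain ⟨i, hi, hasc⟩ := exists_ascent_of_ascCount_pos (l := l.take j)
    (by have := ha.2 j hj hjl; omega)
  rw [List.length_take] at hi
  rw [getD_take_of_lt (by omega), getD_take_of_lt (by omega)] at hasc
  have : l.getD (i + 1) 0 ≤ 1 := ih (i + 1) (by omega)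
  exact h (seqContains_012_of_lt (Nat.lt_add_one i) (by omega) hjl hasc (by omega))

theorem eq_of_sameRelOrder_of_le_one {γ β : List ℕ} (hγ : ∀ x ∈ γ, x ≤ 1)
    (hβ : ∀ x ∈ β, x ≤ 1) (h0 : 0 ∈ β) (h1 : 1 ∈ β) (h : SameRelOrder γ β) : γ = β := by
  obtain ⟨hlen, hord⟩ := h
  rw [forall_mem_le_iff_forall_getD_le] at hγ hβ
  obtain ⟨p, hp, hp0⟩ := List.getElem_of_mem h0
  obtain ⟨q, hq, hq1⟩ := List.getElem_of_mem h1
  rw [← List.getD_eq_getElem _ 0] at hp0 hq1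
  have hγq : γ.getD q 0 = 1 := by
    have := (hord p q (by omega) (by omega)).2 (by omega)
    have := hγ q
    omega
  refine List.ext_getElem hlen fun i hiγ hiβ => ?_
  rw [← List.getD_eq_getElem _ 0, ← List.getD_eq_getElem _ 0]
  -- a binary entry is determined by whether it lies below the `1` at position `q`
  have := hord i q hiγ (by omega)
  have := hγ i
  have := hβ i
  omega

theorem seqContains_iff_sublist_of_le_one {l β : List ℕ} (hl : ∀ x ∈ l, x ≤ 1)
    (hβ : ∀ x ∈ β, x ≤ 1) (h0 : 0 ∈ β) (h1 : 1 ∈ β) : SeqContains l β ↔ β.Sublist l := by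
  refine ⟨fun ⟨γ, hsub, hord⟩ => ?_, seqContains_of_sublist⟩
  rwa [← eq_of_sameRelOrder_of_le_one (fun x hx => hl x (hsub.subset hx)) hβ h0 h1 hord]

theorem isAscentSeq_zero_cons {w : List ℕ} (hw : ∀ x ∈ w, x ≤ 1) : IsAscentSeq (0 :: w) :=
  ⟨fun _ => rfl, fun j _ _ =>
    (forall_mem_le_iff_forall_getD_le.1 (List.forall_mem_cons.2 ⟨zero_le_one, hw⟩) j).trans
      (Nat.le_add_right 1 _)⟩

theorem ascentSeqSet_succ_eq_image {βt : List ℕ} (hβt : ∀ x ∈ βt, x ≤ 1) (h1 : 1 ∈ βt)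
    (n : ℕ) : AscentSeqSet (n + 1) [[0, 1, 2], 0 :: βt] =
      ({w ∈ binaryWords n | ¬ βt.Sublist w}.image (0 :: ·) : Finset (List ℕ)) := by
  ext l
  simp only [AscentSeqSet, List.mem_cons, List.not_mem_nil, or_false, forall_eq_or_imp,
    forall_eq, Set.mem_ofPred_eq, coe_image, coe_filter, Set.mem_image, mem_binaryWords]
  constructor
  · rintro ⟨hlen, hasc, h012, hβ⟩
    have hl := le_one_of_isAscentSeq_of_not_seqContains_012 hasc h012
    obtain ⟨c, w, rfl⟩ := List.exists_cons_of_length_eq_add_one hlen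
    obtain rfl : c = 0 := hasc.1 (by simp)
    refine ⟨w, ⟨⟨by simpa using hlen, fun x hx => hl x (.tail _ hx)⟩, fun hs => ?_⟩, rfl⟩
    exact hβ (seqContains_of_sublist (hs.cons_cons 0))
  · rintro ⟨w, ⟨⟨hlen, hw⟩, hns⟩, rfl⟩
    have hl : ∀ x ∈ 0 :: w, x ≤ 1 := List.forall_mem_cons.2 ⟨zero_le_one, hw⟩
    refine ⟨by simp [hlen], isAscentSeq_zero_cons hw, not_seqContains_012_of_le_one hl, ?_⟩
    rwa [seqContains_iff_sublist_of_le_one hl (List.forall_mem_cons.2 ⟨zero_le_one, hβt⟩)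
      List.mem_cons_self (.tail _ h1), List.cons_sublist_cons]

theorem stmt7_general (k : ℕ) (β : List ℕ)
    (hβ : β ∈ AscentSeqSet k [[0, 1, 2]]) (hone : 1 ∈ β) (n : ℕ) (hn : 1 ≤ n) :
    (AscentSeqSet n [[0, 1, 2], β]).ncard =
      ∑ j ∈ Finset.range (k - 1), (n - 1).choose j := by
  obtain ⟨rfl, hasc, h012⟩ := hβ
  have hbin := le_one_of_isAscentSeq_of_not_seqContains_012 hasc (h012 _ List.mem_cons_self)
  obtain ⟨βt, rfl⟩ : ∃ βt, β = 0 :: βt := by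
    cases β with
    | nil => cases hone
    | cons b βt => exact ⟨βt, by rw [← hasc.1 (by simp)]; rfl⟩
  have hβt : ∀ x ∈ βt, x ≤ 1 := fun x hx => hbin x (.tail _ hx)
  have h1 : 1 ∈ βt := by simpa using hone
  obtain ⟨m, rfl⟩ := Nat.exists_eq_add_of_le' hn
  rw [ascentSeqSet_succ_eq_image hβt h1, Set.ncard_coe_finset,
    card_image_of_injective _ List.cons_injective, card_binaryWords_not_sublist _ _ hβt]
  simp

/-- Suppose `k ≥ 1` and `β` is an ascent sequence of length `k` which avoids the
pattern 012 and contains at least one entry equal to `1`.  Then for all `n ≥ 1`,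
`|A_n(012, β)| = Σ_{j=0}^{k-2} C(n-1, j)`. -/
theorem stmt7 (k : ℕ) (hk : 1 ≤ k) (β : List ℕ)
    (hβ : β ∈ AscentSeqSet k [[0, 1, 2]]) (hone : 1 ∈ β) (n : ℕ) (hn : 1 ≤ n) :
    (AscentSeqSet n [[0, 1, 2], β]).ncard =
      ∑ j ∈ Finset.range (k - 1), (n - 1).choose j :=
  stmt7_general k β hβ hone n hn
end

section
/- If a permutation π contains no copy of the Fishburn pattern f and avoids 123, then π avoids both 2413 and 3412. -/
/-!
In a 123-avoiding Fishburn permutation every ascent `π_j < π_{j+1}` has bottom `π_j = 1`: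
otherwise the value `π_j - 1` stands either left of position `j`, completing a 123 with
`π_j π_{j+1}`, or right of position `j + 1`, completing a copy of `f`. Hence such a
permutation has at most one ascent, whereas an occurrence of 2413 or 3412 forces two
ascents, one between the entries playing the first two letters and one between those
playing the last two.
-/

theorem List.lt_length_of_lt_getD {l : List ℕ} {a i : ℕ} (h : a < l.getD i 0) :
    i < l.length := by
  by_contra! hi
  rw [l.getD_eq_default 0 hi] at h
  omega

theorem exists_apply_lt_apply_succ_of_lt {α : Type*} [LinearOrder α] {f : ℕ → α} {a b : ℕ}
    (hab : a ≤ b) (h : f a < f b) : ∃ t, a ≤ t ∧ t < b ∧ f t < f (t + 1) := by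
  by_contra! hdesc
  have hle : ∀ m, a ≤ m → m ≤ b → f m ≤ f a := by
    intro m ham
    induction m, ham using Nat.le_induction with
    | base => exact fun _ => le_rfl
    | succ m ham ih => exact fun hmb => (hdesc m ham (by omega)).trans (ih (by omega))
  exact (hle b hab le_rfl).not_gt h

theorem List.getElem_triple_sublist {α : Type*} (l : List α) {i j k : ℕ} (hij : i < j)
    (hjk : j < k) (hk : k < l.length) : [l[i], l[j], l[k]].Sublist l :=
  List.sublist_iff_exists_fin_orderEmbedding_get_eq.mpr
    ⟨OrderEmbedding.ofStrictMono ![⟨i, by omega⟩, ⟨j, by omega⟩, ⟨k, hk⟩]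
      (by simp [Fin.strictMono_iff_lt_succ, Fin.forall_fin_two, hij, hjk]),
     by simp [Fin.forall_fin_succ]⟩

theorem seqContains_123_of_lt {l : List ℕ} {i j k : ℕ} (hij : i < j) (hjk : j < k)
    (h₁ : l.getD i 0 < l.getD j 0) (h₂ : l.getD j 0 < l.getD k 0) :
    SeqContains l [1, 2, 3] := by
  have hk : k < l.length := List.lt_length_of_lt_getD h₂
  rw [List.getD_eq_getElem _ _ (by omega), List.getD_eq_getElem _ _ (by omega)] at h₁
  rw [List.getD_eq_getElem _ _ (by omega), List.getD_eq_getElem _ _ hk] at h₂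
  refine ⟨[l[i], l[j], l[k]], l.getElem_triple_sublist hij hjk hk, rfl, fun a b ha hb => ?_⟩
  simp only [List.length_cons, List.length_nil] at ha hb
  interval_cases a <;> interval_cases b <;>
    simp only [List.getD_cons_zero, List.getD_cons_succ] <;> omega

theorem SeqContains.exists_orderEmbedding {l p : List ℕ} (h : SeqContains l p) :
    ∃ f : ℕ ↪o ℕ, ∀ i j, i < p.length → j < p.length →
      p.getD i 0 < p.getD j 0 → l.getD (f i) 0 < l.getD (f j) 0 := by
  obtain ⟨γ, hsub, hlen, hord⟩ := h
  obtain ⟨f, hf⟩ := List.sublist_iff_exists_orderEmbedding_getElem?_eq.mp hsub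
  refine ⟨f, fun i j hi hj hp => ?_⟩
  simpa only [List.getD_eq_getElem?_getD, hf] using (hord i j (hlen ▸ hi) (hlen ▸ hj)).mpr hp

theorem SeqContains.exists_two_ascents {l p : List ℕ} (h : SeqContains l p)
    (h01 : p.getD 0 0 < p.getD 1 0) (h23 : p.getD 2 0 < p.getD 3 0) :
    ∃ s t, s < t ∧ l.getD s 0 < l.getD (s + 1) 0 ∧ l.getD t 0 < l.getD (t + 1) 0 := by
  have h3 : 3 < p.length := List.lt_length_of_lt_getD h23
  obtain ⟨f, hf⟩ := h.exists_orderEmbedding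
  obtain ⟨s, -, hs₁, hs⟩ := exists_apply_lt_apply_succ_of_lt (f := (l.getD · 0))
    (f.monotone zero_le_one) (hf 0 1 (by omega) (by omega) h01)
  obtain ⟨t, ht₂, -, ht⟩ := exists_apply_lt_apply_succ_of_lt (f := (l.getD · 0))
    (f.monotone (by norm_num : 2 ≤ 3)) (hf 2 3 (by omega) (by omega) h23)
  have h12 : f 1 < f 2 := f.lt_iff_lt.mpr (by norm_num)
  exact ⟨s, t, by omega, hs, ht⟩

theorem IsPermList.getD_eq_one_of_ascent {n : ℕ} {π : List ℕ} (hπ : IsPermList n π)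
    (hf : FishburnFree π) (h123 : ¬ SeqContains π [1, 2, 3]) {j : ℕ}
    (hasc : π.getD j 0 < π.getD (j + 1) 0) : π.getD j 0 = 1 := by
  have hj : j < π.length := Nat.lt_of_succ_lt (List.lt_length_of_lt_getD hasc)
  have hmem : π.getD j 0 ∈ List.range' 1 n :=
    hπ.subset (List.getD_eq_getElem _ _ hj ▸ List.getElem_mem hj)
  rw [List.mem_range'_1] at hmem
  by_contra hne
  have hpred : π.getD j 0 - 1 ∈ π :=
    hπ.symm.subset (List.mem_range'_1.mpr ⟨by omega, by omega⟩)
  obtain ⟨k, hk, hkval⟩ := List.mem_iff_getElem.mp hpred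
  rw [← List.getD_eq_getElem _ 0 hk] at hkval
  rcases lt_trichotomy k j with hkj | rfl | hjk
  · exact h123 (seqContains_123_of_lt hkj j.lt_succ_self (by omega) hasc)
  · omega
  · have hk' : k ≠ j + 1 := by rintro rfl; omega
    exact hf ⟨j, k, by omega, hk, by omega, hasc⟩

theorem IsPermList.ascent_unique {n : ℕ} {π : List ℕ} (hπ : IsPermList n π)
    (hf : FishburnFree π) (h123 : ¬ SeqContains π [1, 2, 3]) {s t : ℕ}
    (hs : π.getD s 0 < π.getD (s + 1) 0) (ht : π.getD t 0 < π.getD (t + 1) 0) : s = t := by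
  have hsl : s < π.length := Nat.lt_of_succ_lt (List.lt_length_of_lt_getD hs)
  have htl : t < π.length := Nat.lt_of_succ_lt (List.lt_length_of_lt_getD ht)
  have hst : π.getD s 0 = π.getD t 0 := by
    rw [hπ.getD_eq_one_of_ascent hf h123 hs, hπ.getD_eq_one_of_ascent hf h123 ht]
  rw [List.getD_eq_getElem _ _ hsl, List.getD_eq_getElem _ _ htl] at hst
  exact ((hπ.nodup_iff.mpr List.nodup_range').getElem_inj_iff).mp hst

/-- If a permutation `π` contains no copy of the Fishburn pattern `f` and avoids 123,
then `π` avoids both 2413 and 3412. -/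
theorem stmt10 {n : ℕ} (π : List ℕ) (hπ : IsPermList n π) (hf : FishburnFree π)
    (h123 : ¬ SeqContains π [1, 2, 3]) :
    ¬ SeqContains π [2, 4, 1, 3] ∧ ¬ SeqContains π [3, 4, 1, 2] := by
  have avoids {p : List ℕ} (h01 : p.getD 0 0 < p.getD 1 0) (h23 : p.getD 2 0 < p.getD 3 0) :
      ¬ SeqContains π p := fun hp => by
    obtain ⟨s, t, hst, hs, ht⟩ := hp.exists_two_ascents h01 h23
    exact hst.ne (hπ.ascent_unique hf h123 hs ht)
  exact ⟨avoids (by decide) (by decide), avoids (by decide) (by decide)⟩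
end
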